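/- Let X be a topological space and F a decomposition of X such that the relation R = {(x,y) : y ∈ closure(L_x)} is closed in X × X and is an equivalence relation. If additionally F is pointwise almost periodic, then every element of F is recurrent: each L ∈ F is closed or non-proper. -/

import Mathlib

open Set Topology

def IsDecomposition {X : Type*} (F : Set (Set X)) : Prop :=
  (∀ L ∈ F, L.Nonempty) ∧ (∀ L ∈ F, ∀ L' ∈ F, L ≠ L' → Disjoint L L') ∧ ⋃₀ F = univ

def IsProperSet {X : Type*} [TopologicalSpace X] (L : Set X) : Prop :=
  IsClosed (closure L \ L)

def IsRecurrentSet {X : Type*} [TopologicalSpace X] (L : Set X) : Prop :=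
  IsClosed L ∨ ¬ IsProperSet L

/-! A point `y ∈ closure L \ L` lies in some `M ∈ F` other than `L`; since the closures of
elements of `F` form a decomposition and `closure M` meets `closure L` at `y`, they coincide.
Thus `M ⊆ closure L \ L`, and if `L` were proper, the closed set `closure L \ L` would contain
`closure M = closure L ⊇ L`, which is impossible for nonempty `L`. -/

namespace IsDecomposition

variable {X : Type*} {F : Set (Set X)}

theorem exists_mem (hF : IsDecomposition F) (x : X) : ∃ L ∈ F, x ∈ L :=
  mem_sUnion.mp (hF.2.2 ▸ mem_univ x)

theorem eq_of_mem_of_mem (hF : IsDecomposition F) {L L' : Set X} (hL : L ∈ F) (hL' : L' ∈ F)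
    {x : X} (hx : x ∈ L) (hx' : x ∈ L') : L = L' := by
  by_contra hne
  exact (hF.2.1 L hL L' hL' hne).notMem_of_mem_left hx hx'

variable [TopologicalSpace X]

theorem closure_eq_of_mem_closure (hpap : IsDecomposition ((fun L => closure L) '' F))
    {L L' : Set X} (hL : L ∈ F) (hL' : L' ∈ F) {x : X} (hx : x ∈ closure L)
    (hx' : x ∈ closure L') : closure L = closure L' :=
  hpap.eq_of_mem_of_mem ⟨L, hL, rfl⟩ ⟨L', hL', rfl⟩ hx hx'

theorem isRecurrentSet_of_isDecomposition_closure (hF : IsDecomposition F)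
    (hpap : IsDecomposition ((fun L => closure L) '' F)) {L : Set X} (hL : L ∈ F) :
    IsRecurrentSet L := by
  rw [IsRecurrentSet, or_iff_not_imp_left]
  intro hLc hproper
  obtain ⟨y, hyL, hyL'⟩ : (closure L \ L).Nonempty :=
    sdiff_nonempty.mpr fun h => hLc (closure_subset_iff_isClosed.mp h)
  obtain ⟨M, hM, hyM⟩ := hF.exists_mem y
  have hMcl : closure M = closure L :=
    closure_eq_of_mem_closure hpap hM hL (subset_closure hyM) hyL
  have hML : Disjoint M L := hF.2.1 M hM L hL fun h => hyL' (h ▸ hyM)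
  have hMsub : M ⊆ closure L \ L := subset_sdiff.mpr ⟨hMcl ▸ subset_closure, hML⟩
  have hcl : closure L ⊆ closure L \ L := hMcl ▸ hproper.closure_subset_iff.mpr hMsub
  obtain ⟨x, hx⟩ := hF.1 L hL
  exact (hcl (subset_closure hx)).2 hx

end IsDecomposition

theorem Rclosed_equiv_pap_recurrent_general {X : Type*} [TopologicalSpace X]
    (F : Set (Set X)) (hF : IsDecomposition F)
    (hpap : IsDecomposition ((fun L => closure L) '' F)) :
    ∀ L ∈ F, IsRecurrentSet L :=
  fun _ hL => hF.isRecurrentSet_of_isDecomposition_closure hpap hL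

/-- If R = {(x,y) : y ∈ closure (L_x)} is a closed equivalence relation and F is
pointwise almost periodic, then every element of F is recurrent. -/
theorem Rclosed_equiv_pap_recurrent {X : Type*} [TopologicalSpace X]
    (F : Set (Set X)) (hF : IsDecomposition F)
    (Lx : X → Set X) (hLx : ∀ x, Lx x ∈ F ∧ x ∈ Lx x)
    (hR : IsClosed {p : X × X | p.2 ∈ closure (Lx p.1)})
    (hrefl : ∀ x, x ∈ closure (Lx x))
    (hsymm : ∀ x y, y ∈ closure (Lx x) → x ∈ closure (Lx y))
    (htrans : ∀ x y z, y ∈ closure (Lx x) → z ∈ closure (Lx y) → z ∈ closure (Lx x))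
    (hpap : IsDecomposition ((fun L => closure L) '' F)) :
    ∀ L ∈ F, IsRecurrentSet L :=
  Rclosed_equiv_pap_recurrent_general F hF hpap
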